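/- Let p : G → H be a surjective group homomorphism with finite kernel, and suppose G is finitely presented. Then H is finitely presented. Conversely, if H is finitely presented and ker p is finite, then G is finitely presented. -/

import Mathlib

/-- A group is finitely presented if it is isomorphic to the quotient of a finitely
generated free group by the normal closure of finitely many relations. -/
def FinitelyPresentedGroup (G : Type*) [Group G] : Prop :=
  ∃ (n : ℕ) (rels : Set (FreeGroup (Fin n))), rels.Finite ∧ Nonempty (PresentedGroup rels ≃* G)

/-!
For `K = ker p` finite, a presentation of `G` is assembled from one of `H`: take as generators
lifts of the generators of `H` together with all elements of `K`, and as relators the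
multiplication table of `K`, the action of each generator on `K` by conjugation, and every
relator of `H` set equal to the element of `K` it represents. In the other direction, passing to
the quotient by a finite normal subgroup costs only finitely many relators.
-/

open Function Subgroup

theorem finitelyPresentedGroup_iff_isFinitelyPresented {G : Type*} [Group G] :
    FinitelyPresentedGroup G ↔ Group.IsFinitelyPresented G := by
  constructor
  · rintro ⟨n, rels, hrels, ⟨e⟩⟩
    have := hrels.to_subtype
    exact .equiv e
  · intro
    obtain ⟨n, rels, hrels, ⟨e⟩⟩ :=
      Group.IsFinitelyPresented.exists_mulEquiv_presentedGroup (G := G)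
    exact ⟨n, rels, hrels, ⟨e.symm⟩⟩

theorem Subgroup.normal_of_conj_mem_of_closure_eq_top {F : Type*} [Group F] {X : Set F}
    (hX : closure X = ⊤) {A : Subgroup F} (hA : ∀ x ∈ X ∪ X⁻¹, ∀ w ∈ A, x * w * x⁻¹ ∈ A) :
    A.Normal := by
  rw [← normalizer_eq_top_iff, eq_top_iff, ← hX, closure_le]
  refine fun x hx => mem_normalizer_iff.2 fun w => ⟨hA x (.inl hx) w, fun hw => ?_⟩
  simpa [mul_assoc] using hA x⁻¹ (.inr (by simpa using hx)) _ hw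

theorem MonoidHom.isFinitelyNormallyGenerated_ker_of_finite {F G : Type*} [Group F] [Group G]
    [Group.FG F] (φ : F →* G) (hφ : Surjective φ) (K : Subgroup G) [K.Normal] [Finite K]
    (hK : (K.comap φ).IsFinitelyNormallyGenerated) : φ.ker.IsFinitelyNormallyGenerated := by
  obtain ⟨T, hT, hTK⟩ := hK
  obtain ⟨X, hX, hXfin⟩ := Group.fg_iff.1 ‹Group.FG F›
  let σ := surjInv hφ
  have hσ : ∀ g, φ (σ g) = g := surjInv_eq hφ
  let R : Set F :=
    (fun t => t * (σ (φ t))⁻¹) '' T ∪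
    (fun kk : G × G => σ kk.1 * σ kk.2 * (σ (kk.1 * kk.2))⁻¹) '' ((K : Set G) ×ˢ K) ∪
    (fun xk : F × G => xk.1 * σ xk.2 * xk.1⁻¹ * (σ (φ xk.1 * xk.2 * (φ xk.1)⁻¹))⁻¹) ''
      ((X ∪ X⁻¹) ×ˢ K)
  have hKfin : (K : Set G).Finite := Set.toFinite _
  -- Modulo the relators, `σ` restricts to a homomorphism `κ` on `K` whose image is normalized by
  -- the generators; hence `w ≡ σ (φ w)` on `φ⁻¹(K)`, and `σ 1 ≡ 1`.
  have hRker : normalClosure R ≤ φ.ker := by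
    refine normalClosure_le_normal ?_
    rintro _ ((⟨t, -, rfl⟩ | ⟨⟨k, k'⟩, -, rfl⟩) | ⟨⟨x, k⟩, -, rfl⟩) <;>
      simp [hσ]
  refine ⟨R, ((hT.image _).union ((hKfin.prod hKfin).image _)).union
    (((hXfin.union hXfin.inv).prod hKfin).image _), le_antisymm hRker ?_⟩
  set N := normalClosure R
  let q := QuotientGroup.mk' N
  have hq : ∀ r ∈ R, q r = 1 := fun r hr =>
    (QuotientGroup.eq_one_iff r).2 (subset_normalClosure hr)
  let κ : K →* F ⧸ N := MonoidHom.mk' (fun k => q (σ k)) fun k k' => by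
    have := hq _ (.inl (.inr ⟨(k, k'), ⟨k.2, k'.2⟩, rfl⟩))
    rwa [map_mul, map_inv, mul_inv_eq_one, eq_comm] at this
  let A := κ.range.comap q
  have hconj : ∀ x ∈ X ∪ X⁻¹, ∀ w ∈ A, x * w * x⁻¹ ∈ A := by
    rintro x hx w ⟨k, hk⟩
    refine ⟨⟨φ x * k * (φ x)⁻¹, ‹K.Normal›.conj_mem _ k.2 _⟩, ?_⟩
    have := hq _ (.inr ⟨(x, k), ⟨hx, k.2⟩, rfl⟩)
    simp only [map_mul, map_inv, mul_inv_eq_one] at this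
    change q (σ _) = q (x * w * x⁻¹)
    rw [← this, map_mul, map_mul, map_inv, ← hk]
    rfl
  have hKA : K.comap φ ≤ A := by
    have : A.Normal := normal_of_conj_mem_of_closure_eq_top hX hconj
    rw [← hTK]
    refine normalClosure_le_normal fun t ht => ⟨⟨φ t, ?_⟩, ?_⟩
    · exact show t ∈ K.comap φ from hTK ▸ subset_normalClosure ht
    · have := hq _ (.inl (.inl ⟨t, ht, rfl⟩))
      rwa [map_mul, map_inv, mul_inv_eq_one, eq_comm] at this
  intro w hw
  obtain ⟨k, hk⟩ := hKA (show φ w ∈ K from hw ▸ K.one_mem)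
  have hk1 : k = 1 := by
    have h := congr_arg (QuotientGroup.lift N φ hRker) hk
    change φ (σ k) = φ w at h
    ext
    rwa [hσ, hw] at h
  rw [← QuotientGroup.eq_one_iff, ← QuotientGroup.mk'_apply, ← hk, hk1, map_one]

theorem FreeGroup.ker_lift_sumElim_of_one {α β : Type*} :
    (FreeGroup.lift (Sum.elim FreeGroup.of 1) : FreeGroup (α ⊕ β) →* FreeGroup α).ker =
      normalClosure (Set.range (FreeGroup.of ∘ Sum.inr)) := by
  set N := normalClosure (Set.range (FreeGroup.of ∘ Sum.inr : β → FreeGroup (α ⊕ β)))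
  refine le_antisymm (fun w hw => ?_) (normalClosure_le_normal ?_)
  · have hN : QuotientGroup.mk' N =
        ((QuotientGroup.mk' N).comp (FreeGroup.map Sum.inl)).comp
          (FreeGroup.lift (Sum.elim FreeGroup.of 1)) := by
      refine FreeGroup.ext_hom _ _ fun a => ?_
      rcases a with a | b
      · simp
      · simpa using (subset_normalClosure ⟨b, rfl⟩ : of (Sum.inr b) ∈ N)
    rw [← QuotientGroup.eq_one_iff, ← QuotientGroup.mk'_apply, hN, MonoidHom.comp_apply, hw,
      _root_.map_one]
  · rintro _ ⟨b, rfl⟩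
    simp

theorem Group.IsFinitelyPresented.of_surjective_of_finite_ker {G H : Type*} [Group G] [Group H]
    [hH : Group.IsFinitelyPresented H] (p : G →* H) (hp : Surjective p) [Finite p.ker] :
    Group.IsFinitelyPresented G := by
  obtain ⟨n, ψ, hψ, hψker⟩ := hH.out
  let φ : FreeGroup (Fin n ⊕ p.ker) →* G :=
    FreeGroup.lift (Sum.elim (surjInv hp ∘ ψ ∘ FreeGroup.of) Subtype.val)
  let π : FreeGroup (Fin n ⊕ p.ker) →* FreeGroup (Fin n) := FreeGroup.lift (Sum.elim .of 1)
  let ι : FreeGroup (Fin n) →* FreeGroup (Fin n ⊕ p.ker) := FreeGroup.map Sum.inl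
  have hπι : π.comp ι = .id _ := FreeGroup.ext_hom _ _ fun _ => by simp [π, ι]
  have hpφ : p.comp φ = ψ.comp π := FreeGroup.ext_hom _ _ fun a => by
    rcases a with i | ⟨k, hk⟩
    · simp [φ, π, surjInv_eq hp]
    · simpa [φ, π] using hk
  have hφ : Surjective φ := by
    intro x
    obtain ⟨w, hw⟩ := hψ (p x)
    have hx : x * (φ (ι w))⁻¹ ∈ p.ker := by
      rw [p.mem_ker, map_mul, map_inv, ← p.comp_apply, hpφ, ψ.comp_apply, ← π.comp_apply, hπι,
        MonoidHom.id_apply, hw, mul_inv_cancel]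
    exact ⟨.of (.inr ⟨_, hx⟩) * ι w, by simp [φ]⟩
  have hπ : Surjective π := fun w => ⟨ι w, by rw [← π.comp_apply, hπι, MonoidHom.id_apply]⟩
  refine of_surjective φ hφ (φ.isFinitelyNormallyGenerated_ker_of_finite hφ p.ker ?_)
  rw [MonoidHom.comap_ker, hpφ, ← MonoidHom.comap_ker]
  exact hψker.comap hπ ⟨_, Set.finite_range _, FreeGroup.ker_lift_sumElim_of_one.symm⟩

/-- If `p : G → H` is a surjective group homomorphism with finite kernel, then `G` is
finitely presented if and only if `H` is. -/
theorem finitelyPresented_iff_of_surjective_finite_ker {G H : Type*} [Group G] [Group H]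
    (p : G →* H) (hsurj : Function.Surjective p) (hker : Finite p.ker) :
    (FinitelyPresentedGroup G → FinitelyPresentedGroup H) ∧
      (FinitelyPresentedGroup H → FinitelyPresentedGroup G) := by
  simp only [finitelyPresentedGroup_iff_isFinitelyPresented]
  exact ⟨fun _ => .of_surjective p hsurj (.of_FG p.ker),
    fun _ => .of_surjective_of_finite_ker p hsurj⟩
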